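/- arXiv:0710.3245 — 12 statements merged into one kernel-verified Lean document; each statement's English description precedes it below -/
import Mathlib

section
/- For all natural numbers n, ∑_{j=0}^{n} j · binomial(2n, n-j) = (n/2)·binomial(2n, n); equivalently, 2·∑_{j=0}^{n} j·binomial(2n, n-j) = n·binomial(2n, n). -/
/-!
Substituting `k = n - j` turns the sum into `∑_{k < n} (n - k) C(2n, k)`. With `M = 2n`, each
summand `(M - 2k) C(M, k)` equals `M (C(M-1, k) - C(M-1, k-1))`, so the partial sums telescope to
`M C(M-1, n-1)`, and `2n C(2n-1, n-1) = n C(2n, n)`.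
-/

open Finset

theorem sum_range_sub_two_mul_mul_choose (m K : ℕ) :
    ∑ k ∈ range (K + 1), ((m + 1 : ℤ) - 2 * k) * (m + 1).choose k = (m + 1) * m.choose K := by
  induction K with
  | zero => simp
  | succ K ih =>
    have pascal : ((m + 1).choose (K + 1) : ℤ) = m.choose K + m.choose (K + 1) := by
      exact_mod_cast Nat.choose_succ_succ m K
    have absorb : ((m + 1) * m.choose K : ℤ) = (m + 1).choose (K + 1) * (K + 1) := by
      exact_mod_cast Nat.add_one_mul_choose_eq m K
    rw [sum_range_succ, ih]
    push_cast
    linear_combination 2 * absorb + (m + 1 : ℤ) * pascal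

theorem two_mul_sum_range_sub_mul_choose_two_mul (n : ℕ) :
    2 * ∑ k ∈ range n, (n - k) * (2 * n).choose k = n * (2 * n).choose n := by
  cases n with
  | zero => simp
  | succ m =>
    have central :
        ((2 * m + 2) * (2 * m + 1).choose m : ℤ) = (2 * m + 2).choose (m + 1) * (m + 1) := by
      exact_mod_cast Nat.add_one_mul_choose_eq (2 * m + 1) m
    rw [show 2 * (m + 1) = 2 * m + 1 + 1 by ring]
    zify
    rw [mul_sum, sum_congr rfl fun k hk => by rw [Nat.cast_sub (mem_range.1 hk).le]]
    calc ∑ k ∈ range (m + 1), 2 * (((m + 1 : ℕ) - k : ℤ) * (2 * m + 1 + 1).choose k)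
        = ∑ k ∈ range (m + 1), (((2 * m + 1 : ℕ) + 1 : ℤ) - 2 * k) * (2 * m + 1 + 1).choose k :=
          sum_congr rfl fun k _ => by push_cast; ring
      _ = ((2 * m + 1 : ℕ) + 1 : ℤ) * (2 * m + 1).choose m := sum_range_sub_two_mul_mul_choose _ _
      _ = (m + 1) * (2 * m + 1 + 1).choose (m + 1) := by push_cast; linear_combination central

theorem sum_choose_B1 (n : ℕ) :
    2 * ∑ j ∈ Finset.range (n + 1), j * Nat.choose (2 * n) (n - j) =
      n * Nat.choose (2 * n) n := by
  have reflect : ∑ j ∈ range (n + 1), j * (2 * n).choose (n - j)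
      = ∑ k ∈ range (n + 1), (n - k) * (2 * n).choose k := by
    rw [← sum_range_reflect]
    refine sum_congr rfl fun j hj => ?_
    rw [add_tsub_cancel_right, Nat.sub_sub_self (Nat.lt_succ_iff.1 (mem_range.1 hj))]
  rw [reflect, sum_range_succ, Nat.sub_self, zero_mul, add_zero]
  exact two_mul_sum_range_sub_mul_choose_two_mul n
end

section
/- For all natural numbers n, ∑_{j=0}^{n} j^2 · binomial(2n, n-j) = n · 2^(2n-2); equivalently, 4·∑_{j=0}^{n} j^2·binomial(2n, n-j) = n·4^n. -/
/-!
Substituting `i = n - j` turns the sum into the half `i ≤ n` of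
`∑ i, C(2n, i) (i - n)²`. This full sum is symmetric under `i ↦ 2n - i` with vanishing middle
term, so it is twice the half sum; and it is a quarter of the second moment
`∑ i, C(m, i) (i - (m - i))² = m 2^m` at `m = 2n`. That moment is `2^m` times the variance of a
sum of `m` independent signs, and is proved by induction on `m` with Pascal's rule, under which
the cross terms cancel.
-/

open Finset

theorem Nat.sum_antidiagonal_choose_mul_sub_sq (m : ℕ) :
    ∑ ij ∈ antidiagonal m, (m.choose ij.1 : ℤ) * ((ij.1 : ℤ) - ij.2) ^ 2 = (m : ℤ) * 2 ^ m := by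
  induction m with
  | zero => simp
  | succ m ih =>
    have hsymm : ∀ ij ∈ antidiagonal m, m.choose ij.2 = m.choose ij.1 := fun ij hij =>
      choose_symm_of_eq_add (by rw [← mem_antidiagonal.mp hij, add_comm])
    have htotal : ∑ ij ∈ antidiagonal m, (m.choose ij.1 : ℤ) = 2 ^ m := by
      rw [Finset.Nat.sum_antidiagonal_eq_sum_range_succ_mk]
      exact_mod_cast sum_range_choose m
    rw [sum_antidiagonal_choose_succ_mul (fun i j => ((i : ℤ) - j) ^ 2), ← sum_add_distrib]
    calc _ = ∑ ij ∈ antidiagonal m,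
          (2 * ((m.choose ij.1 : ℤ) * ((ij.1 : ℤ) - ij.2) ^ 2) + 2 * m.choose ij.1) :=
          sum_congr rfl fun ij hij => by rw [hsymm ij hij]; push_cast; ring
      _ = ((m + 1 : ℕ) : ℤ) * 2 ^ (m + 1) := by
          rw [sum_add_distrib, ← mul_sum, ← mul_sum, ih, htotal]; push_cast; ring

theorem Nat.sum_range_choose_mul_two_mul_sub_sq (m : ℕ) :
    ∑ i ∈ range (m + 1), (m.choose i : ℤ) * (2 * (i : ℤ) - m) ^ 2 = (m : ℤ) * 2 ^ m := by
  rw [← sum_antidiagonal_choose_mul_sub_sq, Finset.Nat.sum_antidiagonal_eq_sum_range_succ_mk]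
  refine sum_congr rfl fun i hi => ?_
  rw [Nat.cast_sub (mem_range_succ_iff.mp hi)]
  ring

theorem Finset.sum_range_two_mul_add_one_add_middle {M : Type*} [AddCommMonoid M] {n : ℕ}
    {f : ℕ → M} (hf : ∀ i ≤ 2 * n, f (2 * n - i) = f i) :
    ∑ i ∈ range (2 * n + 1), f i + f n = 2 • ∑ i ∈ range (n + 1), f i := by
  have hupper : ∑ i ∈ range n, f (n + 1 + i) = ∑ i ∈ range n, f i := by
    rw [← sum_range_reflect f n]
    refine sum_congr rfl fun i hi => ?_
    have hi : i < n := mem_range.mp hi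
    rw [← hf _ (by omega)]
    congr 1
    omega
  rw [show 2 * n + 1 = n + 1 + n by ring, sum_range_add, hupper, add_assoc, ← sum_range_succ,
    two_nsmul]

theorem sum_choose_B2 (n : ℕ) :
    4 * ∑ j ∈ Finset.range (n + 1), j ^ 2 * Nat.choose (2 * n) (n - j) =
      n * 4 ^ n := by
  obtain ⟨h, h_def⟩ : ∃ h : ℕ → ℤ, ∀ i, h i = (2 * n).choose i * ((i : ℤ) - n) ^ 2 :=
    ⟨_, fun _ => rfl⟩
  have half : ∑ j ∈ range (n + 1), ((j : ℤ) ^ 2 * (2 * n).choose (n - j)) =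
      ∑ i ∈ range (n + 1), h i := by
    rw [← sum_range_reflect h]
    refine sum_congr rfl fun j hj => ?_
    rw [h_def, add_tsub_cancel_right, Nat.cast_sub (mem_range_succ_iff.mp hj)]
    ring
  have hsymm : ∀ i ≤ 2 * n, h (2 * n - i) = h i := fun i hi => by
    rw [h_def, h_def, Nat.choose_symm hi, Nat.cast_sub hi]; push_cast; ring
  have full : 4 * ∑ i ∈ range (2 * n + 1), h i = 2 * n * 4 ^ n := by
    have moment := Nat.sum_range_choose_mul_two_mul_sub_sq (2 * n)
    push_cast at moment
    rw [show (4 : ℤ) ^ n = 2 ^ (2 * n) by rw [pow_mul]; norm_num, ← moment, mul_sum]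
    exact sum_congr rfl fun i _ => by rw [h_def]; ring
  have split := sum_range_two_mul_add_one_add_middle hsymm
  rw [h_def, sub_self, zero_pow two_ne_zero, mul_zero, add_zero, two_nsmul] at split
  zify
  rw [half]
  linarith
end

section
/- For all natural numbers n, ∑_{j=0}^{n} j^3 · binomial(2n, n-j) = (n^2/2)·binomial(2n, n); equivalently, 2·∑_{j=0}^{n} j^3·binomial(2n, n-j) = n^2·binomial(2n, n). -/
/-!
Gosper's algorithm finds the hypergeometric antidifference
`G j = (j ^ 3 + (n - 1) j ^ 2 + n ^ 2) * choose (2n) (n - j)`, with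
`2 j ^ 3 choose (2n) (n - j) = G j - G (j + 1)` for `j < n`. Telescoping over `j < n` leaves
`G 0 - G n = n ^ 2 choose (2n) n - 2 n ^ 3`, and the last term `j = n` of the sum contributes
exactly the missing `2 n ^ 3`.
-/

open Finset

lemma add_succ_mul_choose_two_mul_sub_succ {n j : ℕ} (h : j < n) :
    (n + j + 1) * (2 * n).choose (n - (j + 1)) = (n - j) * (2 * n).choose (n - j) := by
  obtain ⟨k, rfl⟩ : ∃ k, n = j + 1 + k := ⟨n - (j + 1), by omega⟩
  have hk : j + 1 + k - (j + 1) = k := by omega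
  have hsucc : j + 1 + k - j = k + 1 := by omega
  have hdiff : 2 * (j + 1 + k) - k = j + 1 + k + j + 1 := by omega
  rw [hk, hsucc, mul_comm (k + 1), Nat.choose_succ_right_eq, hdiff, mul_comm]

def cubeChooseAntidiff (n j : ℕ) : ℤ :=
  ((j : ℤ) ^ 3 + ((n : ℤ) - 1) * j ^ 2 + (n : ℤ) ^ 2) * (2 * n).choose (n - j)

lemma two_mul_cube_mul_choose_eq_antidiff_sub {n j : ℕ} (h : j < n) :
    2 * ((j : ℤ) ^ 3 * (2 * n).choose (n - j)) =
      cubeChooseAntidiff n j - cubeChooseAntidiff n (j + 1) := by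
  have step : ((n : ℤ) + j + 1) * (2 * n).choose (n - (j + 1)) =
      ((n : ℤ) - j) * (2 * n).choose (n - j) := by
    have := add_succ_mul_choose_two_mul_sub_succ h
    zify [h.le] at this
    exact this
  have hne : ((n : ℤ) + j + 1) ≠ 0 := by positivity
  apply mul_left_cancel₀ hne
  unfold cubeChooseAntidiff
  push_cast
  linear_combination ((j + 1 : ℤ) ^ 3 + ((n : ℤ) - 1) * (j + 1 : ℤ) ^ 2 + (n : ℤ) ^ 2) * step

theorem sum_choose_B3 (n : ℕ) :
    2 * ∑ j ∈ Finset.range (n + 1), j ^ 3 * Nat.choose (2 * n) (n - j) =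
      n ^ 2 * Nat.choose (2 * n) n := by
  zify
  have telescope : 2 * ∑ j ∈ range n, (j : ℤ) ^ 3 * (2 * n).choose (n - j) =
      cubeChooseAntidiff n 0 - cubeChooseAntidiff n n := by
    rw [mul_sum, ← sum_range_sub' (cubeChooseAntidiff n)]
    exact sum_congr rfl fun j hj => two_mul_cube_mul_choose_eq_antidiff_sub (mem_range.mp hj)
  rw [sum_range_succ, mul_add, telescope]
  simp only [cubeChooseAntidiff, Nat.sub_zero, Nat.sub_self, Nat.choose_zero_right]
  push_cast
  ring
end

section
/- For all natural numbers n, ∑_{j=0}^{n} j^4 · binomial(2n, n-j) = 2^(2n-3) · n · (3n-1); equivalently, 8·∑_{j=0}^{n} j^4·binomial(2n, n-j) = 4^n·n·(3n-1). -/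
/-!
Write `M m p = ∑_{i+j=m} C(m,i) (i-j)^p`. Pascal's rule turns `M (m+1) p` into
`∑_{i+j=m} C(m,i) ((i-j-1)^p + (i-j+1)^p)`, so the even moments satisfy
`M (m+1) 0 = 2 M m 0`, `M (m+1) 2 = 2 M m 2 + 2 M m 0` and
`M (m+1) 4 = 2 M m 4 + 12 M m 2 + 2 M m 0`, giving `M m 4 = m (3m-2) 2^m`.
For `m = 2n` the summand is `16 C(2n,k) (k-n)^4`, symmetric under `k ↦ 2n-k` and zero at `k = n`,
so `M (2n) 4 = 32 ∑_{j ≤ n} j^4 C(2n, n-j)`.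
-/

open Finset

lemma two_nsmul_sum_range_of_symm {M : Type*} [AddCommMonoid M] (f : ℕ → M) (n : ℕ)
    (hf : ∀ k ≤ 2 * n, f (2 * n - k) = f k) :
    2 • ∑ k ∈ range (n + 1), f k = ∑ k ∈ range (2 * n + 1), f k + f n := by
  have upper_half : ∑ k ∈ range n, f (n + 1 + k) + f n = ∑ k ∈ range (n + 1), f k :=
    calc ∑ k ∈ range n, f (n + 1 + k) + f n
      _ = ∑ k ∈ range (n + 1), f (n + k) := by
        rw [sum_range_succ' (fun k => f (n + k))]
        simp only [add_assoc, add_comm 1, add_zero]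
      _ = ∑ k ∈ range (n + 1), f (n + 1 - 1 - k) := sum_congr rfl fun k hk => by
        rw [← hf (n + k) (by grind)]
        congr 1
        omega
      _ = ∑ k ∈ range (n + 1), f k := sum_range_reflect f (n + 1)
  rw [show 2 * n + 1 = (n + 1) + n by omega, sum_range_add f (n + 1) n, add_assoc, upper_half,
    two_nsmul]

/-- `2^m E[(2X - m)^p]` for `X ~ Bin(m, 1/2)`. -/
def binomialCentralMoment (m p : ℕ) : ℤ :=
  ∑ ij ∈ antidiagonal m, (m.choose ij.1 : ℤ) * ((ij.1 : ℤ) - ij.2) ^ p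

lemma binomialCentralMoment_eq_sum_range (m p : ℕ) :
    binomialCentralMoment m p =
      ∑ k ∈ range (m + 1), (m.choose k : ℤ) * (2 * (k : ℤ) - m) ^ p := by
  rw [binomialCentralMoment, Nat.sum_antidiagonal_eq_sum_range_succ
    (fun i j => (m.choose i : ℤ) * ((i : ℤ) - j) ^ p)]
  refine sum_congr rfl fun k hk => ?_
  rw [Nat.cast_sub (by grind)]
  ring

lemma binomialCentralMoment_succ (m p : ℕ) :
    binomialCentralMoment (m + 1) p =
      ∑ ij ∈ antidiagonal m,
        (m.choose ij.1 : ℤ) *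
          (((ij.1 : ℤ) - ij.2 - 1) ^ p + ((ij.1 : ℤ) - ij.2 + 1) ^ p) := by
  rw [binomialCentralMoment, sum_antidiagonal_choose_succ_mul (fun i j => ((i : ℤ) - j) ^ p),
    ← sum_add_distrib]
  refine sum_congr rfl fun ij hij => ?_
  rw [Nat.choose_symm_of_eq_add (mem_antidiagonal.mp hij).symm]
  push_cast
  ring

lemma binomialCentralMoment_zero (m : ℕ) : binomialCentralMoment m 0 = 2 ^ m := by
  induction m with
  | zero => simp [binomialCentralMoment]
  | succ m ih =>
    rw [binomialCentralMoment_succ, pow_succ, ← ih, binomialCentralMoment, sum_mul]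
    refine sum_congr rfl fun _ _ => by ring

lemma binomialCentralMoment_two (m : ℕ) : binomialCentralMoment m 2 = m * 2 ^ m := by
  induction m with
  | zero => simp [binomialCentralMoment]
  | succ m ih =>
    have recurrence : binomialCentralMoment (m + 1) 2 =
        2 * binomialCentralMoment m 2 + 2 * binomialCentralMoment m 0 := by
      rw [binomialCentralMoment_succ]
      simp only [binomialCentralMoment, mul_sum, ← sum_add_distrib]
      refine sum_congr rfl fun _ _ => by ring
    rw [recurrence, ih, binomialCentralMoment_zero]
    push_cast
    ring

lemma binomialCentralMoment_four (m : ℕ) :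
    binomialCentralMoment m 4 = m * (3 * m - 2) * 2 ^ m := by
  induction m with
  | zero => simp [binomialCentralMoment]
  | succ m ih =>
    have recurrence : binomialCentralMoment (m + 1) 4 = 2 * binomialCentralMoment m 4 +
        12 * binomialCentralMoment m 2 + 2 * binomialCentralMoment m 0 := by
      rw [binomialCentralMoment_succ]
      simp only [binomialCentralMoment, mul_sum, ← sum_add_distrib]
      refine sum_congr rfl fun _ _ => by ring
    rw [recurrence, ih, binomialCentralMoment_two, binomialCentralMoment_zero]
    push_cast
    ring

lemma binomialCentralMoment_two_mul {p : ℕ} (hp : Even p) (hp₀ : p ≠ 0) (n : ℕ) :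
    binomialCentralMoment (2 * n) p =
      2 ^ (p + 1) * ∑ j ∈ range (n + 1), (j : ℤ) ^ p * (2 * n).choose (n - j) := by
  set G : ℕ → ℤ := fun k => ((2 * n).choose k : ℤ) * ((k : ℤ) - n) ^ p with hG
  have moment_eq : binomialCentralMoment (2 * n) p = 2 ^ p * ∑ k ∈ range (2 * n + 1), G k := by
    rw [binomialCentralMoment_eq_sum_range, mul_sum]
    refine sum_congr rfl fun k _ => ?_
    rw [hG, show 2 * (k : ℤ) - (2 * n : ℕ) = 2 * (k - n) by push_cast; ring, mul_pow]
    ring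
  have symm : ∀ k ≤ 2 * n, G (2 * n - k) = G k := fun k hk => by
    simp only [hG, Nat.choose_symm hk, Nat.cast_sub hk]
    rw [show ((2 * n : ℕ) : ℤ) - k - n = -(k - n) by push_cast; ring, hp.neg_pow]
  have reflect : ∑ k ∈ range (n + 1), G k =
      ∑ j ∈ range (n + 1), (j : ℤ) ^ p * (2 * n).choose (n - j) := by
    rw [← sum_range_reflect]
    refine sum_congr rfl fun j hj => ?_
    simp only [hG, add_tsub_cancel_right, Nat.cast_sub (by grind : j ≤ n), sub_sub_cancel_left,
      hp.neg_pow, mul_comm]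
  have center : G n = 0 := by simp [hG, hp₀]
  have halves := two_nsmul_sum_range_of_symm G n symm
  rw [center, add_zero, two_nsmul, reflect] at halves
  rw [moment_eq, ← halves, pow_succ]
  ring

theorem sum_choose_B4 (n : ℕ) :
    8 * ∑ j ∈ Finset.range (n + 1), j ^ 4 * Nat.choose (2 * n) (n - j) =
      4 ^ n * n * (3 * n - 1) := by
  have moment := binomialCentralMoment_two_mul (p := 4) (by decide) (by norm_num) n
  rw [binomialCentralMoment_four, pow_mul] at moment
  rcases Nat.eq_zero_or_pos n with rfl | hn
  · simp
  zify [show 1 ≤ 3 * n by omega]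
  push_cast at moment
  linarith
end

section
/- For all natural numbers n, ∑_{j=0}^{n} j^5 · binomial(2n, n-j) = (1/2)·binomial(2n, n)·n^2·(2n-1); equivalently, 2·∑_{j=0}^{n} j^5·binomial(2n, n-j) = binomial(2n, n)·n^2·(2n-1). -/
/-!
Reflecting `j ↦ n - j` turns the sum into `∑_{k ≤ n} (n - k)^5 * C(2n, k)`, and this summand is
hypergeometric in `k` with a polynomial Gosper certificate: `2 (n - k)^5 C(2n, k)` is the forward
difference of `P(k) C(2n, k)` for an explicit quintic `P` with `P(0) = 0`. The sum therefore
telescopes to `P(n + 1) C(2n, n + 1) = n^2 (2n - 1) C(2n, n)`.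
-/

open Finset

lemma Nat.cast_choose_succ_right_eq {R : Type*} [CommRing R] (m k : ℕ) :
    (m.choose (k + 1) : R) * (k + 1) = m.choose k * (m - k) := by
  rcases le_or_gt k m with hk | hk
  · simpa [Nat.cast_sub hk] using congrArg (Nat.cast : ℕ → R) (Nat.choose_succ_right_eq m k)
  · simp [Nat.choose_eq_zero_of_lt hk, Nat.choose_eq_zero_of_lt (Nat.lt_succ_of_lt hk)]

/-- The Gosper certificate, found by running Gosper's algorithm on `(n - k)^5 * C(2n, k)`. -/
def gosperB5 (n k : ℤ) : ℤ :=
  k ^ 5 + (-2 - 4 * n) * k ^ 4 + (8 * n + 6 * n ^ 2) * k ^ 3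
    + (1 - 2 * n - 10 * n ^ 2 - 4 * n ^ 3) * k ^ 2 + (n ^ 4 + 4 * n ^ 3 + 4 * n ^ 2 - 2 * n) * k

lemma gosperB5_zero (n : ℤ) : gosperB5 n 0 = 0 := by
  simp [gosperB5]

lemma gosperB5_self_add_one (n : ℤ) : gosperB5 n (n + 1) = (n + 1) * n * (2 * n - 1) := by
  unfold gosperB5; ring

lemma gosperB5_recurrence (n k : ℤ) :
    gosperB5 n (k + 1) * (2 * n - k) - gosperB5 n k * (k + 1) = 2 * (n - k) ^ 5 * (k + 1) := by
  unfold gosperB5; ring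

lemma two_mul_pow_five_mul_choose_eq_sub (n k : ℕ) :
    2 * ((n : ℤ) - k) ^ 5 * (2 * n).choose k
      = gosperB5 n (k + 1) * (2 * n).choose (k + 1) - gosperB5 n k * (2 * n).choose k := by
  have hrec := Nat.cast_choose_succ_right_eq (R := ℤ) (2 * n) k
  push_cast at hrec
  apply mul_left_cancel₀ (by positivity : ((k : ℤ) + 1) ≠ 0)
  linear_combination -gosperB5 n (k + 1) * hrec - ((2 * n).choose k : ℤ) * gosperB5_recurrence n k

lemma two_mul_sum_pow_five_mul_choose (n : ℕ) :
    2 * ∑ k ∈ range (n + 1), ((n : ℤ) - k) ^ 5 * (2 * n).choose k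
      = (2 * n).choose n * (n : ℤ) ^ 2 * (2 * n - 1) := by
  have hcentral := Nat.cast_choose_succ_right_eq (R := ℤ) (2 * n) n
  push_cast at hcentral
  apply mul_left_cancel₀ (by positivity : ((n : ℤ) + 1) ≠ 0)
  calc ((n : ℤ) + 1) * (2 * ∑ k ∈ range (n + 1), ((n : ℤ) - k) ^ 5 * (2 * n).choose k)
      = (n + 1) * ∑ k ∈ range (n + 1), (gosperB5 n (k + 1) * (2 * n).choose (k + 1)
          - gosperB5 n k * (2 * n).choose k) := by
        simp only [mul_sum, ← mul_assoc, two_mul_pow_five_mul_choose_eq_sub]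
    _ = (n + 1) * (gosperB5 n (n + 1) * (2 * n).choose (n + 1)) := by
        have htelescope := sum_range_sub (fun k : ℕ ↦ gosperB5 n k * (2 * n).choose k) (n + 1)
        push_cast at htelescope
        rw [htelescope, gosperB5_zero, zero_mul, sub_zero]
    _ = (n + 1) * ((2 * n).choose n * (n : ℤ) ^ 2 * (2 * n - 1)) := by
        rw [gosperB5_self_add_one]
        linear_combination ((n : ℤ) + 1) * n * (2 * n - 1) * hcentral

theorem sum_choose_B5 (n : ℕ) :
    2 * ∑ j ∈ Finset.range (n + 1), j ^ 5 * Nat.choose (2 * n) (n - j) =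
      Nat.choose (2 * n) n * n ^ 2 * (2 * n - 1) := by
  obtain rfl | hn := n.eq_zero_or_pos
  · simp
  have hreflect : ∑ j ∈ range (n + 1), j ^ 5 * (2 * n).choose (n - j)
      = ∑ k ∈ range (n + 1), (n - k) ^ 5 * (2 * n).choose k := by
    rw [← Nat.sum_antidiagonal_eq_sum_range_succ (fun j i ↦ j ^ 5 * (2 * n).choose i),
      ← Nat.sum_antidiagonal_swap]
    simp only [Prod.fst_swap, Prod.snd_swap]
    exact Nat.sum_antidiagonal_eq_sum_range_succ (fun i j ↦ j ^ 5 * (2 * n).choose i) n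
  rw [hreflect]
  zify [show 1 ≤ 2 * n by omega]
  rw [← two_mul_sum_pow_five_mul_choose]
  congr 1
  refine sum_congr rfl fun k hk ↦ ?_
  rw [Nat.cast_sub (mem_range_succ_iff.mp hk)]
end

section
/- For all natural numbers n ≥ 1 and all natural numbers k: 2n · ∑_{j=0}^{n} j^k · binomial(2n-1, n-j) = n · ∑_{j=0}^{n} j^k · binomial(2n, n-j) + ∑_{j=0}^{n} j^{k+1} · binomial(2n, n-j). -/
theorem two_mul_mul_choose_two_mul_sub_one {n j : ℕ} (hj : j ≤ n) :
    2 * n * (2 * n - 1).choose (n - j) = (n + j) * (2 * n).choose (n - j) := by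
  rcases n with _ | m
  · simp [Nat.le_zero.mp hj]
  · have h := Nat.choose_mul_succ_eq (2 * m + 1) (m + 1 - j)
    rw [show 2 * (m + 1) - 1 = 2 * m + 1 by omega, show 2 * (m + 1) = 2 * m + 1 + 1 by omega,
      show 2 * m + 1 + 1 - (m + 1 - j) = m + 1 + j by omega] at *
    linarith

theorem Btilde_B_relation_general (n : ℕ) (k : ℕ) :
    2 * n * ∑ j ∈ Finset.range (n + 1), j ^ k * Nat.choose (2 * n - 1) (n - j) =
      n * (∑ j ∈ Finset.range (n + 1), j ^ k * Nat.choose (2 * n) (n - j)) +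
        ∑ j ∈ Finset.range (n + 1), j ^ (k + 1) * Nat.choose (2 * n) (n - j) := by
  rw [Finset.mul_sum, Finset.mul_sum, ← Finset.sum_add_distrib]
  refine Finset.sum_congr rfl fun j hj => ?_
  have hjn : j ≤ n := Nat.lt_succ_iff.mp (Finset.mem_range.mp hj)
  calc 2 * n * (j ^ k * (2 * n - 1).choose (n - j))
      = j ^ k * (2 * n * (2 * n - 1).choose (n - j)) := by ring
    _ = j ^ k * ((n + j) * (2 * n).choose (n - j)) := by rw [two_mul_mul_choose_two_mul_sub_one hjn]
    _ = n * (j ^ k * (2 * n).choose (n - j)) + j ^ (k + 1) * (2 * n).choose (n - j) := by ring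

theorem Btilde_B_relation (n : ℕ) (hn : 1 ≤ n) (k : ℕ) :
    2 * n * ∑ j ∈ Finset.range (n + 1), j ^ k * Nat.choose (2 * n - 1) (n - j) =
      n * (∑ j ∈ Finset.range (n + 1), j ^ k * Nat.choose (2 * n) (n - j)) +
        ∑ j ∈ Finset.range (n + 1), j ^ (k + 1) * Nat.choose (2 * n) (n - j) :=
  Btilde_B_relation_general n k
end

section
/- For all natural numbers n ≥ 1, the polynomials P_n(x) := ∑_{i=0}^{n} binomial(2n, n-i)·x^i over ℚ satisfy the recursion x·P_{n+1}(x) = (x+1)^2·P_n(x) + (x-1)·binomial(2n, n) − (x/(n+1))·binomial(2n, n). -/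
open Polynomial

noncomputable def Ppoly (n : ℕ) : Polynomial ℚ :=
  ∑ i ∈ Finset.range (n + 1), C (Nat.choose (2 * n) (n - i) : ℚ) * X ^ i

/-! The coefficient of `X ^ k` in `Ppoly n` is `(2n).choose (n + k)` for every `k` (it vanishes
for `k > n`), so applying Pascal's rule twice shows that `(X + 1) ^ 2 * Ppoly n` and
`X * Ppoly (n + 1)` agree except in degrees `0` and `1`. The remaining discrepancy is accounted
for by `(n + 1) * (2n).choose (n + 1) = n * (2n).choose n`. -/

theorem Nat.choose_add_two_add_two (m j : ℕ) :
    (m + 2).choose (j + 2) = m.choose j + 2 * m.choose (j + 1) + m.choose (j + 2) := by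
  simp only [Nat.choose_succ_succ']
  ring

theorem Nat.choose_two_mul_add_two_succ (n : ℕ) :
    (2 * n + 2).choose (n + 1) = 2 * ((2 * n).choose n + (2 * n).choose (n + 1)) := by
  rw [Nat.choose_succ_succ', ← Nat.choose_symm_half, Nat.choose_succ_succ']
  ring

theorem Nat.succ_mul_choose_two_mul_succ (n : ℕ) :
    (n + 1) * (2 * n).choose (n + 1) = n * (2 * n).choose n := by
  have h := Nat.choose_succ_right_eq (2 * n) n
  rw [show 2 * n - n = n by omega] at h
  linarith

theorem coeff_Ppoly (n k : ℕ) : (Ppoly n).coeff k = (2 * n).choose (n + k) := by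
  simp only [Ppoly, finsetSum_coeff, coeff_C_mul_X_pow, Finset.sum_ite_eq, Finset.mem_range]
  split_ifs with hk
  · rw [Nat.choose_symm_of_eq_add (by omega : 2 * n = (n - k) + (n + k))]
  · rw [Nat.choose_eq_zero_of_lt (by omega), Nat.cast_zero]

theorem X_mul_Ppoly_succ_add (n : ℕ) :
    X * Ppoly (n + 1) + C ((2 * n).choose n : ℚ) =
      (X + 1) ^ 2 * Ppoly n + C ((2 * n).choose (n + 1) : ℚ) * X := by
  rw [show (X + 1) ^ 2 * Ppoly n = X * (X * Ppoly n) + 2 * (X * Ppoly n) + Ppoly n by ring]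
  ext (_ | _ | k) <;>
    simp only [coeff_add, coeff_X_mul, coeff_X_mul_zero, coeff_ofNat_mul, coeff_C, coeff_C_mul_X,
      coeff_Ppoly, add_zero]
  · simp
  · rw [show 2 * (n + 1) = 2 * n + 2 by ring, Nat.choose_two_mul_add_two_succ]
    push_cast
    ring
  · rw [show 2 * (n + 1) = 2 * n + 2 by ring, show n + 1 + (k + 1) = n + k + 2 by ring,
      Nat.choose_add_two_add_two]
    push_cast
    rfl

theorem Ppoly_recursion_general (n : ℕ) :
    (C ((n : ℚ) + 1)) * X * Ppoly (n + 1) =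
      (C ((n : ℚ) + 1)) * (X + 1) ^ 2 * Ppoly n +
        (C ((n : ℚ) + 1)) * (X - 1) * C (Nat.choose (2 * n) n : ℚ) -
          X * C (Nat.choose (2 * n) n : ℚ) := by
  have hcat : C ((n : ℚ) + 1) * C ((2 * n).choose (n + 1) : ℚ) =
      C (n : ℚ) * C ((2 * n).choose n : ℚ) := by
    rw [← map_mul, ← map_mul]
    exact congrArg C (by exact_mod_cast Nat.succ_mul_choose_two_mul_succ n)
  rw [map_add, map_one] at hcat ⊢
  linear_combination (C (n : ℚ) + 1) * X_mul_Ppoly_succ_add n + X * hcat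

theorem Ppoly_recursion (n : ℕ) (hn : 1 ≤ n) :
    (C ((n : ℚ) + 1)) * X * Ppoly (n + 1) =
      (C ((n : ℚ) + 1)) * (X + 1) ^ 2 * Ppoly n +
        (C ((n : ℚ) + 1)) * (X - 1) * C (Nat.choose (2 * n) n : ℚ) -
          X * C (Nat.choose (2 * n) n : ℚ) :=
  Ppoly_recursion_general n
end

section
/- For natural numbers n, m, k with m ≤ n and ℓ ≥ 1: binomial(n, m)·binomial(n, k) − binomial(n, m-1)·binomial(n, k-1) = ((n - m - k + 1)/(n+1))·binomial(n+1, m)·binomial(n+1, k). Equivalently, (n+1)·(binomial(n,m)·binomial(n,k) − binomial(n,m-1)·binomial(n,k-1)) = (n - m - k + 1)·binomial(n+1,m)·binomial(n+1,k), as an identity in ℤ for all m, k ≥ 1. -/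
theorem choose_product_identity (n m k : ℕ) (hm : 1 ≤ m) (hk : 1 ≤ k) (hmn : m ≤ n) :
    ((n : ℤ) + 1) *
        ((Nat.choose n m : ℤ) * Nat.choose n k -
          (Nat.choose n (m - 1) : ℤ) * Nat.choose n (k - 1)) =
      ((n : ℤ) - m - k + 1) * Nat.choose (n + 1) m * Nat.choose (n + 1) k := by
  obtain ⟨m, rfl⟩ : ∃ m', m = m' + 1 := ⟨m - 1, by omega⟩
  obtain ⟨k, rfl⟩ : ∃ k', k = k' + 1 := ⟨k - 1, by omega⟩
  simp only [Nat.add_sub_cancel, Nat.choose_succ_succ n m, Nat.choose_succ_succ n k]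
  have h1 : ((n : ℤ) + 1) * Nat.choose n m =
      ((Nat.choose n m : ℤ) + Nat.choose n (m + 1)) * (m + 1) := by
    have := Nat.add_one_mul_choose_eq n m
    rw [Nat.choose_succ_succ] at this
    exact_mod_cast congrArg (Nat.cast : ℕ → ℤ) this
  have h2 : ((n : ℤ) + 1) * Nat.choose n k =
      ((Nat.choose n k : ℤ) + Nat.choose n (k + 1)) * (k + 1) := by
    have := Nat.add_one_mul_choose_eq n k
    rw [Nat.choose_succ_succ] at this
    exact_mod_cast congrArg (Nat.cast : ℕ → ℤ) this
  push_cast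
  linear_combination (-((Nat.choose n k : ℤ) + Nat.choose n (k + 1))) * h1 -
    ((Nat.choose n m : ℤ) + Nat.choose n (m + 1)) * h2
end

section
/- For all natural numbers k ≥ 1: ∑_{λ=0}^{k} ((λ+1)^2/(k+1)) · binomial(2k+2, k-λ) = 2^(2k); equivalently, ∑_{λ=0}^{k} (λ+1)^2 · binomial(2k+2, k-λ) = (k+1)·4^k. -/
/-!
Reflecting `l ↦ k - l` turns the sum into `∑_{j ≤ k} C(n, j) (k + 1 - j)²` with `n = 2k + 2`,
which is a quarter of the half sum of `C(n, j) (n - 2j)²`. These terms are symmetric under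
`j ↦ n - j` and vanish at the middle `j = k + 1`, so the half sum is half of the full second
moment `∑_j C(n, j) (n - 2j)² = n 2ⁿ` (the variance of a sum of `n` independent signs).
-/

open Finset

theorem sum_range_two_mul_add_one_of_symmetric {M : Type*} [AddCommMonoid M] (f : ℕ → M)
    (m : ℕ) (hf : ∀ j ≤ 2 * m, f (2 * m - j) = f j) :
    ∑ j ∈ range (2 * m + 1), f j = 2 • ∑ j ∈ range m, f j + f m := by
  have hupper : ∑ j ∈ range m, f (m + 1 + j) = ∑ j ∈ range m, f j := by
    rw [← sum_range_reflect f m]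
    refine sum_congr rfl fun j hj => ?_
    rw [mem_range] at hj
    rw [← hf (m + 1 + j) (by omega)]
    congr 1
    omega
  rw [show 2 * m + 1 = m + 1 + m by ring, sum_range_add, hupper, sum_range_succ]
  abel

theorem sum_range_choose_mul_sub_two_mul_sq (n : ℕ) (x : ℤ) :
    ∑ i ∈ range (n + 1), (n.choose i : ℤ) * (x - 2 * i) ^ 2 = 2 ^ n * ((x - n) ^ 2 + n) := by
  induction n generalizing x with
  | zero => simp
  | succ n ih =>
    have hshift : ∀ i : ℕ, (x - 2 * ((i + 1 : ℕ) : ℤ)) ^ 2 = (x - 2 - 2 * i) ^ 2 := by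
      intro i; push_cast; ring
    -- Pascal's rule splits the sum into the same sums at rank `n`, centred at `x` and `x - 2`.
    rw [sum_choose_succ_mul (fun i _ => (x - 2 * i) ^ 2) n]
    simp only [hshift, ih]
    push_cast
    ring

theorem sum_range_choose_mul_sub_two_mul_sq_self (n : ℕ) :
    ∑ i ∈ range (n + 1), (n.choose i : ℤ) * ((n : ℤ) - 2 * i) ^ 2 = (n : ℤ) * 2 ^ n := by
  rw [sum_range_choose_mul_sub_two_mul_sq]
  ring

theorem sum_range_choose_mul_sq_halfway (m : ℕ) :
    ∑ j ∈ range (m + 1), (2 * m + 2).choose j * (m + 1 - j) ^ 2 = (m + 1) * 4 ^ m := by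
  rw [show 2 * m + 2 = 2 * (m + 1) by ring]
  set n := 2 * (m + 1) with hn
  set f : ℕ → ℤ := fun j => (n.choose j : ℤ) * (n - 2 * j) ^ 2
  have hsymm : ∀ j ≤ n, f (n - j) = f j := by
    intro j hj
    simp only [f, Nat.choose_symm hj, Nat.cast_sub hj]
    ring
  have hmid : f (m + 1) = 0 := by simp [f, hn]
  have hhalf : 2 * ∑ j ∈ range (m + 1), f j = n * 2 ^ n := by
    have hsplit := sum_range_two_mul_add_one_of_symmetric f (m + 1) hsymm
    rw [hmid, add_zero, two_nsmul] at hsplit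
    rw [two_mul, ← hsplit]
    exact sum_range_choose_mul_sub_two_mul_sq_self n
  have hf : ∀ j ∈ range (m + 1), f j = 4 * ((n.choose j * (m + 1 - j) ^ 2 : ℕ) : ℤ) := by
    intro j hj
    rw [mem_range] at hj
    simp only [f, hn]
    push_cast [Nat.cast_sub hj.le]
    ring
  rw [sum_congr rfl hf, ← mul_sum, ← Nat.cast_sum, hn, pow_mul] at hhalf
  have hsum : ((∑ j ∈ range (m + 1), n.choose j * (m + 1 - j) ^ 2 : ℕ) : ℤ)
      = (m + 1) * 4 ^ m := by
    rw [pow_succ] at hhalf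
    push_cast at hhalf ⊢
    linarith
  exact_mod_cast hsum

theorem odd_grassmannian_G2k1_3_general (k : ℕ) :
    ∑ l ∈ Finset.range (k + 1), (l + 1) ^ 2 * Nat.choose (2 * k + 2) (k - l) =
      (k + 1) * 4 ^ k := by
  rw [← sum_range_choose_mul_sq_halfway k, ← sum_range_reflect]
  refine sum_congr rfl fun j hj => ?_
  rw [mem_range] at hj
  rw [mul_comm, show k + 1 - 1 - j + 1 = k + 1 - j by omega, show k - (k + 1 - 1 - j) = j by omega]

theorem odd_grassmannian_G2k1_3 (k : ℕ) (hk : 1 ≤ k) :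
    ∑ l ∈ Finset.range (k + 1), (l + 1) ^ 2 * Nat.choose (2 * k + 2) (k - l) =
      (k + 1) * 4 ^ k :=
  odd_grassmannian_G2k1_3_general k
end

section
/- For all natural numbers k ≥ 1: ∑_{λ=0}^{k} 2^{k+1} · ((λ+1)^2/(k+1)) · binomial(2k+2, k-λ) = 2^(3k+1). -/
/-!
Reflecting the summation index turns the sum into `∑_{m ≤ k} (k + 1 - m)² C(2k+2, m)`.
Pascal's rule and `(j + 1) C(n+1, j+1) = (n + 1) C(n, j)` give
`(n - 2j - 1) C(n+1, j+1) = (n + 1) (C(n, j+1) - C(n, j))`, which makes the partial sums of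
`(n + 1 - 2m)² C(n+1, m)` telescope onto partial sums of `C(n, m)`. For `n = 2k + 1` the sum of
`C(2k+1, m)` over `m ≤ k` is half of `2^(2k+1)`, hence `∑_{m ≤ k} (k + 1 - m)² C(2k+2, m) = (k + 1) 4^k`.
-/

open Finset

section CommRing

variable {R : Type*} [CommRing R]

theorem succ_mul_choose_succ_sub_choose (n j : ℕ) :
    ((n : R) + 1) * ((n.choose (j + 1) : R) - n.choose j) =
      ((n : R) - 2 * j - 1) * (n + 1).choose (j + 1) := by
  have pascal : ((n + 1).choose (j + 1) : R) = n.choose j + n.choose (j + 1) := by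
    rw [Nat.choose_succ_succ, Nat.cast_add]
  have absorb : ((n : R) + 1) * n.choose j = (n + 1).choose (j + 1) * ((j : R) + 1) := by
    exact_mod_cast congrArg (Nat.cast : ℕ → R) (Nat.add_one_mul_choose_eq n j)
  linear_combination -((n : R) + 1) * pascal - 2 * absorb

theorem sum_range_sq_mul_choose_succ (n j : ℕ) :
    ∑ m ∈ range (j + 1), ((n : R) + 1 - 2 * m) ^ 2 * (n + 1).choose m =
      ((n : R) + 1) * (2 * ∑ m ∈ range (j + 1), (n.choose m : R) +
        ((n : R) - 2 * j - 1) * n.choose j) := by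
  induction j with
  | zero => simp only [zero_add, sum_range_one, Nat.cast_zero, Nat.choose_zero_right]; ring
  | succ j ih =>
    rw [sum_range_succ, ih, sum_range_succ (fun m => (n.choose m : R)) (j + 1)]
    have step := succ_mul_choose_succ_sub_choose (R := R) n j
    push_cast
    linear_combination -((n : R) - 2 * j - 1) * step

end CommRing

theorem sum_range_succ_sq_mul_choose_sub (k : ℕ) :
    ∑ l ∈ range (k + 1), (l + 1) ^ 2 * (2 * k + 2).choose (k - l) = (k + 1) * 4 ^ k := by
  have reflect : ∑ l ∈ range (k + 1), (((l : ℤ) + 1) ^ 2 * (2 * k + 2).choose (k - l)) =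
      ∑ m ∈ range (k + 1), ((k : ℤ) + 1 - m) ^ 2 * (2 * k + 2).choose m := by
    rw [← sum_range_reflect]
    refine sum_congr rfl fun l hl => ?_
    have hlk : l ≤ k := Nat.lt_succ_iff.mp (mem_range.mp hl)
    rw [show k + 1 - 1 - l = k - l by omega, Nat.sub_sub_self hlk, Nat.cast_sub hlk]
    ring
  have halfway : ∑ m ∈ range (k + 1), ((2 * k + 1).choose m : ℤ) = 4 ^ k := by
    exact_mod_cast Nat.sum_range_choose_halfway k
  zify
  rw [reflect]
  refine mul_left_cancel₀ (four_ne_zero (α := ℤ)) ?_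
  calc 4 * ∑ m ∈ range (k + 1), ((k : ℤ) + 1 - m) ^ 2 * (2 * k + 2).choose m
      = ∑ m ∈ range (k + 1), (((2 * k + 1 : ℕ) : ℤ) + 1 - 2 * m) ^ 2 * (2 * k + 1 + 1).choose m := by
        rw [mul_sum]
        exact sum_congr rfl fun m _ => by push_cast; ring
    _ = _ := sum_range_sq_mul_choose_succ (2 * k + 1) k
    _ = 4 * (((k : ℤ) + 1) * 4 ^ k) := by
        rw [halfway]
        push_cast
        ring

theorem spinor_dimension_G2k1_3_general (k : ℕ) :
    ∑ l ∈ Finset.range (k + 1),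
        (2 : ℚ) ^ (k + 1) * (((l : ℚ) + 1) ^ 2 / ((k : ℚ) + 1)) *
          Nat.choose (2 * k + 2) (k - l) =
      2 ^ (3 * k + 1) := by
  have hsum : ∑ l ∈ range (k + 1), ((l : ℚ) + 1) ^ 2 * (2 * k + 2).choose (k - l) =
      ((k : ℚ) + 1) * 4 ^ k := by
    exact_mod_cast sum_range_succ_sq_mul_choose_sub k
  calc ∑ l ∈ range (k + 1),
        (2 : ℚ) ^ (k + 1) * (((l : ℚ) + 1) ^ 2 / ((k : ℚ) + 1)) * (2 * k + 2).choose (k - l)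
      = 2 ^ (k + 1) / ((k : ℚ) + 1) *
          ∑ l ∈ range (k + 1), ((l : ℚ) + 1) ^ 2 * (2 * k + 2).choose (k - l) := by
        rw [mul_sum]
        exact sum_congr rfl fun _ _ => by ring
    _ = 2 ^ (3 * k + 1) := by
        rw [hsum, show (4 : ℚ) = 2 ^ 2 by norm_num, ← pow_mul]
        field_simp
        ring

theorem spinor_dimension_G2k1_3 (k : ℕ) (hk : 1 ≤ k) :
    ∑ l ∈ Finset.range (k + 1),
        (2 : ℚ) ^ (k + 1) * (((l : ℚ) + 1) ^ 2 / ((k : ℚ) + 1)) *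
          Nat.choose (2 * k + 2) (k - l) =
      2 ^ (3 * k + 1) :=
  spinor_dimension_G2k1_3_general k
end

section
/- For natural numbers k, p, q with k ≥ p ≥ q ≥ 0, define f(k,p,q) := ((p−q+1)/(2k+1))·binomial(2k+1, k−q+1)·binomial(2k+1, k−p), and set f(k,k+1,q) := 0. Then f(k,p,q) − f(k,p+1,q+1) = ((p+q+1)(p−q+1)/((2k+1)(2k+2)))·binomial(2k+2, k−p)·binomial(2k+2, k−q+1). -/
/-- Dimension of the `gl(2k)`-representation with highest weight `(2^{k−p},1^{p−q},0^q)`,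
extended by `f(k,k+1,q) = 0`. -/
noncomputable def fdim (k p q : ℕ) : ℚ :=
  if p ≤ k then
    (((p : ℚ) - q + 1) / (2 * k + 1)) * Nat.choose (2 * k + 1) (k - q + 1) *
      Nat.choose (2 * k + 1) (k - p)
  else 0

theorem fdim_difference (k p q : ℕ) (hqp : q ≤ p) (hpk : p ≤ k) :
    fdim k p q - fdim k (p + 1) (q + 1) =
      (((p : ℚ) + q + 1) * ((p : ℚ) - q + 1) / ((2 * k + 1) * (2 * k + 2))) *
        Nat.choose (2 * k + 2) (k - p) * Nat.choose (2 * k + 2) (k - q + 1) := by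
  have hqk : q ≤ k := le_trans hqp hpk
  have h1 : ((2:ℚ) * k + 1) ≠ 0 := by positivity
  have h2 : ((2:ℚ) * k + 2) ≠ 0 := by positivity
  have h3 : ((k:ℚ) + q + 1) ≠ 0 := by positivity
  have h4 : ((k:ℚ) + p + 2) ≠ 0 := by positivity
  have hA : ((Nat.choose (2*k+2) (k-q+1) : ℚ)) = (Nat.choose (2*k+1) (k-q+1) : ℚ) * (2*k+2) / ((k:ℚ)+q+1) := by
    have h := Nat.choose_mul_succ_eq (2*k+1) (k-q+1)
    have e1 : 2*k+1+1 - (k-q+1) = k+q+1 := by omega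
    have e2 : 2*k+1+1 = 2*k+2 := by ring
    rw [e1, e2] at h
    have h' : (((2*k+1).choose (k-q+1) * (2*k+2) : ℕ) : ℚ) = (((2*k+2).choose (k-q+1) * (k+q+1) : ℕ) : ℚ) := by
      exact_mod_cast h
    push_cast at h'
    rw [eq_div_iff h3]; linear_combination -h'
  have hB : ((Nat.choose (2*k+2) (k-p) : ℚ)) = (Nat.choose (2*k+1) (k-p) : ℚ) * (2*k+2) / ((k:ℚ)+p+2) := by
    have h := Nat.choose_mul_succ_eq (2*k+1) (k-p)
    have e1 : 2*k+1+1 - (k-p) = k+p+2 := by omega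
    have e2 : 2*k+1+1 = 2*k+2 := by ring
    rw [e1, e2] at h
    have h' : (((2*k+1).choose (k-p) * (2*k+2) : ℕ) : ℚ) = (((2*k+2).choose (k-p) * (k+p+2) : ℕ) : ℚ) := by
      exact_mod_cast h
    push_cast at h'
    rw [eq_div_iff h4]; linear_combination -h'
  rcases eq_or_lt_of_le hpk with hpe | hlt
  · subst hpe
    rw [fdim, fdim, if_pos le_rfl, if_neg (by omega)]
    have ekp : p - p = 0 := by omega
    rw [ekp] at hB ⊢
    rw [Nat.choose_zero_right] at hB ⊢
    rw [Nat.choose_zero_right, hA]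
    push_cast
    field_simp
    ring
  · rw [fdim, fdim, if_pos hpk, if_pos (by omega)]
    have e1 : k - (q+1) + 1 = k - q := by omega
    have e2 : k - (p+1) = k - p - 1 := by omega
    rw [e1, e2]
    have hc : ((Nat.choose (2*k+1) (k-q) : ℚ)) = (Nat.choose (2*k+1) (k-q+1) : ℚ) * ((k:ℚ)-q+1) / ((k:ℚ)+q+1) := by
      have h := Nat.choose_succ_right_eq (2*k+1) (k-q)
      have f1 : 2*k+1 - (k-q) = k+q+1 := by omega
      rw [f1] at h
      have h' : (((2*k+1).choose (k-q+1) * (k-q+1) : ℕ) : ℚ) = (((2*k+1).choose (k-q) * (k+q+1) : ℕ) : ℚ) := by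
        exact_mod_cast h
      push_cast [Nat.cast_sub hqk] at h'
      rw [eq_div_iff h3]; linear_combination -h'
    have hd : ((Nat.choose (2*k+1) (k-p-1) : ℚ)) = (Nat.choose (2*k+1) (k-p) : ℚ) * ((k:ℚ)-p) / ((k:ℚ)+p+2) := by
      have h := Nat.choose_succ_right_eq (2*k+1) (k-p-1)
      have f1 : 2*k+1 - (k-p-1) = k+p+2 := by omega
      have f2 : k-p-1+1 = k-p := by omega
      rw [f1, f2] at h
      have h' : (((2*k+1).choose (k-p) * (k-p) : ℕ) : ℚ) = (((2*k+1).choose (k-p-1) * (k+p+2) : ℕ) : ℚ) := by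
        exact_mod_cast h
      push_cast [Nat.cast_sub hpk] at h'
      rw [eq_div_iff h4]; linear_combination -h'
    rw [hc, hd, hA, hB]
    push_cast
    field_simp
    ring
end

section
/- For all natural numbers k ≥ 2: ∑_{p=1}^{k+1} (p^4/2)·binomial(2k+2, k+1−p)·binomial(2k+2, k+1) + (1/2)·∑_{p=1}^{k+1} ∑_{q=1}^{k+1} (p−q)^2·(p+q)^2·binomial(2k+2, k+1−p)·binomial(2k+2, k+1−q) = (2k+2)(2k+1)·2^(4k−1). -/
/-!
Put `m = k + 1`, `a p = C(2m, m - p)`, `c = C(2m, m)` and `S r = ∑_{p=1}^m p^r a p`. Since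
`(p - q)²(p + q)² = (p² - q²)²`, the left side is `S 4 (c + 2 S 0) / 2 - (S 2)²`. Folding the row
`C(2m, ·)` about its centre turns `c + 2 S 0`, `2 S 2`, `2 S 4` into the even central moments
`∑_j (j - m)^r C(2m, j)`. For the symmetric variable `2j - n` on the row `C(n, ·)`, Pascal's rule
gives the recursion `M_r(n + 1) = ∑_j ((2j - n - 1)^r + (2j - n + 1)^r) C(n, j)`, whence the
moments `2^n`, `n 2^n` and `n (3n - 2) 2^n`; the identity is then arithmetic in `4^m`.
-/

open Finset

section

variable {R : Type*} [CommRing R]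

theorem sum_range_succ_mul_choose_succ (f : ℕ → R) (n : ℕ) :
    ∑ j ∈ range (n + 1 + 1), f j * (n + 1).choose j =
      ∑ j ∈ range (n + 1), (f j + f (j + 1)) * n.choose j := by
  have hshift : ∑ j ∈ range (n + 1), f j * n.choose j =
      ∑ j ∈ range (n + 1), f (j + 1) * n.choose (j + 1) + f 0 := by
    rw [sum_range_succ', sum_range_succ (fun j => f (j + 1) * _), Nat.choose_succ_self]
    simp
  rw [sum_range_succ']
  simp only [add_mul, sum_add_distrib, hshift, Nat.choose_succ_succ', Nat.cast_add, mul_add,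
    Nat.choose_zero_right, Nat.cast_one, mul_one]
  ring

theorem sum_range_cast_choose (n : ℕ) : ∑ j ∈ range (n + 1), (n.choose j : R) = 2 ^ n := by
  exact_mod_cast congrArg (Nat.cast : ℕ → R) (Nat.sum_range_choose n)

theorem sum_range_two_mul_sub_sq_mul_choose (n : ℕ) :
    ∑ j ∈ range (n + 1), (2 * (j : R) - n) ^ 2 * n.choose j = (n : R) * 2 ^ n := by
  induction n with
  | zero => simp
  | succ n ih =>
    rw [sum_range_succ_mul_choose_succ]
    calc _ = ∑ j ∈ range (n + 1),
          (2 * ((2 * (j : R) - n) ^ 2 * n.choose j) + 2 * n.choose j) := by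
          refine sum_congr rfl fun j _ => ?_
          push_cast
          ring
      _ = _ := by
          rw [sum_add_distrib, ← mul_sum, ← mul_sum, ih, sum_range_cast_choose]
          push_cast
          ring

theorem sum_range_two_mul_sub_pow_four_mul_choose (n : ℕ) :
    ∑ j ∈ range (n + 1), (2 * (j : R) - n) ^ 4 * n.choose j = (n : R) * (3 * n - 2) * 2 ^ n := by
  induction n with
  | zero => simp
  | succ n ih =>
    rw [sum_range_succ_mul_choose_succ]
    calc _ = ∑ j ∈ range (n + 1), (2 * ((2 * (j : R) - n) ^ 4 * n.choose j) +
          12 * ((2 * (j : R) - n) ^ 2 * n.choose j) + 2 * n.choose j) := by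
          refine sum_congr rfl fun j _ => ?_
          push_cast
          ring
      _ = _ := by
          rw [sum_add_distrib, sum_add_distrib, ← mul_sum, ← mul_sum, ← mul_sum, ih,
            sum_range_two_mul_sub_sq_mul_choose, sum_range_cast_choose]
          push_cast
          ring

theorem sum_range_two_mul_add_one_eq_of_symm {M : Type*} [AddCommMonoid M] (F : ℕ → M) (m : ℕ)
    (hF : ∀ i ≤ m, F (m + i) = F (m - i)) :
    ∑ j ∈ range (2 * m + 1), F j = F m + 2 • ∑ i ∈ Icc 1 m, F (m - i) := by
  have hlow : ∑ j ∈ range m, F j = ∑ i ∈ Icc 1 m, F (m - i) :=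
    sum_nbij' (fun j => m - j) (fun i => m - i)
      (by intro j; simp only [mem_range, mem_Icc]; omega)
      (by intro i; simp only [mem_range, mem_Icc]; omega)
      (by intro j; simp only [mem_range]; omega)
      (by intro i; simp only [mem_Icc]; omega)
      (fun j hj => congrArg F (by simp only [mem_range] at hj; omega))
  have hhigh : ∑ j ∈ range m, F (m + 1 + j) = ∑ i ∈ Icc 1 m, F (m - i) :=
    sum_nbij' (fun j => j + 1) (fun i => i - 1)
      (by intro j; simp only [mem_range, mem_Icc]; omega)
      (by intro i; simp only [mem_range, mem_Icc]; omega)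
      (by intro j; simp only [mem_range]; omega)
      (by intro i; simp only [mem_Icc]; omega)
      (fun j hj => by
        rw [← hF (j + 1) (by simp only [mem_range] at hj; omega), add_assoc, add_comm 1])
  rw [show 2 * m + 1 = m + 1 + m by ring, sum_range_add, sum_range_succ, hlow, hhigh, two_nsmul]
  abel

theorem two_mul_sum_Icc_choose_add_choose (m : ℕ) :
    2 * ∑ i ∈ Icc 1 m, ((2 * m).choose (m - i) : R) + (2 * m).choose m = 4 ^ m := by
  have hsymm : ∀ i ≤ m, ((2 * m).choose (m + i) : R) = (2 * m).choose (m - i) := fun i hi =>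
    congrArg Nat.cast (Nat.choose_symm_of_eq_add (by omega))
  rw [show (4 : R) ^ m = 2 ^ (2 * m) by rw [pow_mul]; norm_num, ← sum_range_cast_choose,
    sum_range_two_mul_add_one_eq_of_symm _ m hsymm, nsmul_eq_mul, Nat.cast_ofNat]
  ring

theorem sum_range_two_mul_sub_pow_mul_choose_of_even (m : ℕ) {r : ℕ} (hr : Even r) :
    ∑ j ∈ range (2 * m + 1), (2 * (j : R) - 2 * m) ^ r * (2 * m).choose j =
      0 ^ r * (2 * m).choose m +
        2 ^ (r + 1) * ∑ i ∈ Icc 1 m, (i : R) ^ r * (2 * m).choose (m - i) := by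
  have hfold : ∀ i ≤ m, (2 * ((m - i : ℕ) : R) - 2 * m) ^ r = 2 ^ r * (i : R) ^ r := by
    intro i hi
    rw [Nat.cast_sub hi, show 2 * ((m : R) - i) - 2 * m = -(2 * i) by ring, hr.neg_pow, mul_pow]
  rw [sum_range_two_mul_add_one_eq_of_symm, nsmul_eq_mul, mul_sum, pow_succ, mul_sum]
  · congr 1
    · rw [sub_self]
    · refine sum_congr rfl fun i hi => ?_
      rw [hfold i (mem_Icc.1 hi).2]
      ring
  · intro i hi
    rw [hfold i hi, Nat.choose_symm_of_eq_add (show 2 * m = (m + i) + (m - i) by omega)]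
    push_cast
    ring

theorem sum_sum_sub_sq_mul_mul {ι : Type*} (s : Finset ι) (u w : ι → R) :
    ∑ p ∈ s, ∑ q ∈ s, (u p - u q) ^ 2 * w p * w q =
      2 * ((∑ p ∈ s, w p) * ∑ p ∈ s, u p ^ 2 * w p) - 2 * (∑ p ∈ s, u p * w p) ^ 2 := by
  calc _ = ∑ p ∈ s, ∑ q ∈ s,
        (u p ^ 2 * w p * w q + w p * (u q ^ 2 * w q) - 2 * (u p * w p) * (u q * w q)) :=
        sum_congr rfl fun p _ => sum_congr rfl fun q _ => by ring
    _ = _ := by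
        simp only [sum_add_distrib, sum_sub_distrib, ← mul_sum, ← sum_mul]
        ring

end

theorem four_mul_sum_Icc_sq_mul_choose (m : ℕ) :
    4 * ∑ i ∈ Icc 1 m, (i : ℚ) ^ 2 * (2 * m).choose (m - i) = m * 4 ^ m := by
  have h := sum_range_two_mul_sub_pow_mul_choose_of_even (R := ℚ) m even_two
  have hmoment := sum_range_two_mul_sub_sq_mul_choose (R := ℚ) (2 * m)
  push_cast at hmoment
  rw [hmoment, pow_mul] at h
  linear_combination -h / 2

theorem eight_mul_sum_Icc_pow_four_mul_choose (m : ℕ) :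
    8 * ∑ i ∈ Icc 1 m, (i : ℚ) ^ 4 * (2 * m).choose (m - i) = m * (3 * m - 1) * 4 ^ m := by
  have h := sum_range_two_mul_sub_pow_mul_choose_of_even (R := ℚ) m (by decide : Even 4)
  have hmoment := sum_range_two_mul_sub_pow_four_mul_choose (R := ℚ) (2 * m)
  push_cast at hmoment
  rw [hmoment, pow_mul] at h
  linear_combination -h / 4

theorem spinor_dimension_G2k_4 (k : ℕ) (hk : 2 ≤ k) :
    (∑ p ∈ Finset.Icc 1 (k + 1),
        ((p : ℚ) ^ 4 / 2) * Nat.choose (2 * k + 2) (k + 1 - p) *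
          Nat.choose (2 * k + 2) (k + 1)) +
      (1 / 2 : ℚ) *
        ∑ p ∈ Finset.Icc 1 (k + 1), ∑ q ∈ Finset.Icc 1 (k + 1),
          ((p : ℚ) - q) ^ 2 * ((p : ℚ) + q) ^ 2 *
            Nat.choose (2 * k + 2) (k + 1 - p) * Nat.choose (2 * k + 2) (k + 1 - q) =
      (2 * (k : ℚ) + 2) * (2 * (k : ℚ) + 1) * 2 ^ (4 * k - 1) := by
  have h0 := two_mul_sum_Icc_choose_add_choose (R := ℚ) (k + 1)
  have h2 := four_mul_sum_Icc_sq_mul_choose (k + 1)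
  have h4 := eight_mul_sum_Icc_pow_four_mul_choose (k + 1)
  rw [show 2 * (k + 1) = 2 * k + 2 by ring] at h0 h2 h4
  push_cast at h2 h4
  set S0 := ∑ p ∈ Icc 1 (k + 1), ((2 * k + 2).choose (k + 1 - p) : ℚ)
  set S2 := ∑ p ∈ Icc 1 (k + 1), (p : ℚ) ^ 2 * (2 * k + 2).choose (k + 1 - p)
  set S4 := ∑ p ∈ Icc 1 (k + 1), (p : ℚ) ^ 4 * (2 * k + 2).choose (k + 1 - p)
  have hsingle : ∑ p ∈ Icc 1 (k + 1), ((p : ℚ) ^ 4 / 2) * (2 * k + 2).choose (k + 1 - p) *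
      (2 * k + 2).choose (k + 1) = S4 * (2 * k + 2).choose (k + 1) / 2 := by
    rw [sum_mul, sum_div]
    exact sum_congr rfl fun p _ => by ring
  have hdouble : ∑ p ∈ Icc 1 (k + 1), ∑ q ∈ Icc 1 (k + 1), ((p : ℚ) - q) ^ 2 * ((p : ℚ) + q) ^ 2 *
      (2 * k + 2).choose (k + 1 - p) * (2 * k + 2).choose (k + 1 - q) =
      2 * (S0 * S4) - 2 * S2 ^ 2 := by
    calc _ = ∑ p ∈ Icc 1 (k + 1), ∑ q ∈ Icc 1 (k + 1), ((p : ℚ) ^ 2 - (q : ℚ) ^ 2) ^ 2 *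
          (2 * k + 2).choose (k + 1 - p) * (2 * k + 2).choose (k + 1 - q) :=
          sum_congr rfl fun p _ => sum_congr rfl fun q _ => by ring
      _ = _ := by
          rw [sum_sum_sub_sq_mul_mul]
          simp only [← pow_mul]
          rfl
  have hpow : (4 : ℚ) ^ (k + 1) * 4 ^ (k + 1) = 32 * 2 ^ (4 * k - 1) := by
    rw [← pow_add, show (4 : ℚ) = 2 ^ 2 by norm_num, ← pow_mul, show (32 : ℚ) = 2 ^ 5 by norm_num,
      ← pow_add]
    congr 1
    omega
  rw [hsingle, hdouble]
  linear_combination (S4 / 2) * h0 + (4 ^ (k + 1) / 16) * h4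
    - ((S2 + (k + 1) * 4 ^ (k + 1) / 4) / 4) * h2 + ((k + 1) * (2 * k + 1) / 16) * hpow
end
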